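/- Let 𝒳 = {0,1}, let δ_n be the Hamming distance on 𝒳^n, let P be the Bernoulli(1/2) distribution and Q the Bernoulli(3/4) distribution on 𝒳, and let X = {X^n} be the mixed information source with Pr[X^n = x^n] = (1/2)∏_{i=1}^n P(x_i) + (1/2)∏_{i=1}^n Q(x_i). With logarithms to base 2 and 0 < D ≤ 1/2, a real number R satisfies R ≥ inf_Y Ī(X;Y), where the infimum is over all general information sources Y = {Y^n} on 𝒳^n with p-limsup_{n→∞} (1/n) δ_n(X^n, Y^n) ≤ D, if and only if R ≥ h(1/2) − h(D) = 1 − h(D), where h(u) = −u log₂ u − (1−u) log₂(1−u) is the binary entropy function. -/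

import Mathlib

open scoped BigOperators Classical
open Filter

/-- Words of length `n` over the alphabet `𝒳`. -/
abbrev Word (𝒳 : Type) (n : ℕ) : Type := Fin n → 𝒳

/-- A probability distribution on a finite type, given by its probability mass function. -/
structure FinDist (Ω : Type) [Fintype Ω] where
  p : Ω → ℝ
  nonneg : ∀ ω, 0 ≤ p ω
  sum_one : ∑ ω, p ω = 1

/-- Probability of an event. -/
noncomputable def FinDist.prob {Ω : Type} [Fintype Ω] (μ : FinDist Ω) (E : Ω → Prop) : ℝ :=
  ∑ ω, if E ω then μ.p ω else 0

/-- Pushforward (distribution of `h(X)` when `X ∼ μ`). -/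
noncomputable def FinDist.map {Ω Ω' : Type} [Fintype Ω] [Fintype Ω']
    (μ : FinDist Ω) (h : Ω → Ω') : FinDist Ω' where
  p ω' := ∑ ω, if h ω = ω' then μ.p ω else 0
  nonneg ω' := Finset.sum_nonneg fun ω _ => by
    by_cases hh : h ω = ω' <;> simp [hh, μ.nonneg ω]
  sum_one := by
    rw [Finset.sum_comm]
    simpa using μ.sum_one

/-- Variational distance `σ(μ, ν) = (1/2) ∑_x |μ(x) − ν(x)|`. -/
noncomputable def tvDist {Ω : Type} [Fintype Ω] (μ ν : FinDist Ω) : ℝ :=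
  (∑ ω, |μ.p ω - ν.p ω|) / 2

/-- `p-limsup_{n→∞} Z_n = inf { α | lim_n Pr[Z_n > α] = 0 }`. -/
noncomputable def plimsup {Ω : ℕ → Type} [∀ n, Fintype (Ω n)]
    (μ : ∀ n, FinDist (Ω n)) (Z : ∀ n, Ω n → ℝ) : ℝ :=
  sInf {α : ℝ | Tendsto (fun n => (μ n).prob fun ω => α < Z n ω) atTop (nhds 0)}

/-- `F_X(R) = limsup_n Pr[(1/n) log(1/P_{X^n}(X^n)) ≥ R]`, logarithm to base `b`. -/
noncomputable def FX {𝒳 : Type} [Fintype 𝒳] (b : ℝ)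
    (X : ∀ n, FinDist (Word 𝒳 n)) (R : ℝ) : ℝ :=
  limsup (fun n => (X n).prob fun x => R ≤ Real.logb b (1 / (X n).p x) / n) atTop

/-- Spectral sup-mutual information rate `Ī(X;Y)` of a joint source `W` (whose first
marginal is the source), logarithm to base `b`. -/
noncomputable def Ibar {𝒳 : Type} [Fintype 𝒳] (b : ℝ)
    (W : ∀ n, FinDist (Word 𝒳 n × Word 𝒳 n)) : ℝ :=
  plimsup W fun n xy =>
    Real.logb b ((W n).p xy /
      ((∑ y, (W n).p (xy.1, y)) * (∑ x, (W n).p (x, xy.2)))) / n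

/-- Joint sources `(X^n, Y^n)` whose first marginal is `X^n` and such that
`p-limsup (1/n) δ_n(X^n, Y^n) ≤ D`. -/
def Admissible {𝒳 : Type} [Fintype 𝒳] (X : ∀ n, FinDist (Word 𝒳 n))
    (δ : ∀ n, Word 𝒳 n → Word 𝒳 n → ℝ) (D : ℝ) :
    Set (∀ n, FinDist (Word 𝒳 n × Word 𝒳 n)) :=
  {W | (∀ n x, ∑ y, (W n).p (x, y) = (X n).p x) ∧
       plimsup W (fun n xy => δ n xy.1 xy.2 / n) ≤ D}

/-- The triple `(R, D, S)` is achievable for the source `X` and distortion measures `δ`. -/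
def AchievableTriple {𝒳 : Type} [Fintype 𝒳] (b : ℝ) (X : ∀ n, FinDist (Word 𝒳 n))
    (δ : ∀ n, Word 𝒳 n → Word 𝒳 n → ℝ) (R D S : ℝ) : Prop :=
  ∃ (M : ℕ → ℕ) (f : ∀ n, Word 𝒳 n → Fin (M n)) (g : ∀ n, Fin (M n) → Word 𝒳 n),
    limsup (fun n => Real.logb b (M n) / n) atTop ≤ R ∧
    plimsup X (fun n x => δ n x (g n (f n x)) / n) ≤ D ∧
    limsup (fun n => tvDist ((X n).map fun x => g n (f n x)) (X n)) atTop ≤ S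

/-- The rate-distortion-perception function `R(D,S)`. -/
noncomputable def RDS {𝒳 : Type} [Fintype 𝒳] (b : ℝ) (X : ∀ n, FinDist (Word 𝒳 n))
    (δ : ∀ n, Word 𝒳 n → Word 𝒳 n → ℝ) (D S : ℝ) : ℝ :=
  sInf {R | AchievableTriple b X δ R D S}

/-- Binary entropy function with logarithm to base 2. -/
noncomputable def binH (u : ℝ) : ℝ := -u * Real.logb 2 u - (1 - u) * Real.logb 2 (1 - u)

/-- The Bernoulli(1/2) distribution `P` on `{0,1}`: `P(0) = P(1) = 1/2`. -/
noncomputable def Pber : Bool → ℝ := fun _ => 1 / 2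

/-- The Bernoulli(3/4) distribution `Q` on `{0,1}`: `Q(0) = 1/4`, `Q(1) = 3/4`. -/
noncomputable def Qber : Bool → ℝ := fun x => if x then 3 / 4 else 1 / 4

/-- The Hamming distance as a real-valued distortion function on words. -/
noncomputable def hamδ : ∀ n, Word Bool n → Word Bool n → ℝ :=
  fun _ x y => (hammingDist x y : ℝ)

/-!
Achievability: pass `X` through a binary symmetric channel with crossover `D`. By Chernoff's bound
the distortion rate concentrates at `D`. The uniform half of the mixture gives
`P_{X^n} ≥ 2^{-(n+1)}`, hence `P_{Y^n} ≥ 2^{-(n+1)}`, so the information density is at most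
`log (D^d (1-D)^(n-d)) + n + 1`, which is `≤ n (1 - h(D) + ε)` unless `d` falls well below `n D`,
an event of exponentially small probability.

Converse: the words with at least `2n/5` zeros satisfy `P_{X^n}(x) ≤ 2^{-n}` and carry mass about
`1/2`. There, `i(x;y) ≤ n α` forces `P(x,y) ≤ 2^{nα} 2^{-n} P_{Y^n}(y)`, and a Hamming ball of
radius `n l ≤ n/2` has at most `2^{n h(l)}` points, so this part of `{i ≤ n α, d ≤ n l}` has
probability at most `2^{n (α - 1 + h(l))}`. If `Pr[i > n α] → 0` and `l > D`, this forces
`α ≥ 1 - h(l)`; letting `l ↓ D` gives `Ī(X;Y) ≥ 1 - h(D)`.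
-/

open Finset Topology

namespace FinDist

variable {Ω : Type} [Fintype Ω] (μ : FinDist Ω)

lemma prob_nonneg (E : Ω → Prop) : 0 ≤ μ.prob E :=
  sum_nonneg fun ω _ => by split_ifs <;> simp [μ.nonneg ω]

lemma prob_mono {E F : Ω → Prop} (h : ∀ ω, E ω → F ω) : μ.prob E ≤ μ.prob F :=
  sum_le_sum fun ω _ => by
    by_cases hE : E ω
    · simp [hE, h ω hE]
    · by_cases hF : F ω <;> simp [hE, hF, μ.nonneg ω]

lemma prob_eq_zero {E : Ω → Prop} (h : ∀ ω, ¬ E ω) : μ.prob E = 0 :=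
  sum_eq_zero fun ω _ => by simp [h ω]

lemma prob_add_prob_not (E : Ω → Prop) : μ.prob E + μ.prob (fun ω => ¬ E ω) = 1 := by
  rw [prob, prob, ← sum_add_distrib, ← μ.sum_one]
  exact sum_congr rfl fun ω _ => by by_cases h : E ω <;> simp [h]

lemma prob_or_le (E F : Ω → Prop) : μ.prob (fun ω => E ω ∨ F ω) ≤ μ.prob E + μ.prob F := by
  rw [prob, prob, prob, ← sum_add_distrib]
  exact sum_le_sum fun ω _ => by
    by_cases hE : E ω <;> by_cases hF : F ω <;> simp [hE, hF, μ.nonneg ω]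

lemma prob_le_sum_mul {E : Ω → Prop} {f : Ω → ℝ} (hf : ∀ ω, 0 ≤ f ω)
    (h : ∀ ω, E ω → 1 ≤ f ω) : μ.prob E ≤ ∑ ω, μ.p ω * f ω :=
  sum_le_sum fun ω _ => by
    by_cases hE : E ω
    · simpa [hE] using le_mul_of_one_le_right (μ.nonneg ω) (h ω hE)
    · simpa [hE] using mul_nonneg (μ.nonneg ω) (hf ω)

lemma prob_le_sum_of_p_le {E : Ω → Prop} [DecidablePred E] {g : Ω → ℝ}
    (h : ∀ ω, E ω → μ.p ω ≤ g ω) : μ.prob E ≤ ∑ ω, if E ω then g ω else 0 :=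
  sum_le_sum fun ω _ => by
    by_cases hE : E ω <;> simp [hE, h ω]

lemma prob_p_lt_le {s : ℝ} (hs : 0 ≤ s) : μ.prob (fun ω => μ.p ω < s) ≤ Fintype.card Ω * s := by
  classical
  calc μ.prob (fun ω => μ.p ω < s) ≤ ∑ ω, if μ.p ω < s then s else 0 :=
        μ.prob_le_sum_of_p_le fun ω h => h.le
    _ ≤ ∑ _ω : Ω, s := sum_le_sum fun ω _ => by split_ifs <;> simp [hs]
    _ = Fintype.card Ω * s := by simp

variable {α β : Type} [Fintype α] [Fintype β] (W : FinDist (α × β))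

def fst : FinDist α where
  p x := ∑ y, W.p (x, y)
  nonneg _ := sum_nonneg fun _ _ => W.nonneg _
  sum_one := by rw [← Fintype.sum_prod_type']; exact W.sum_one

def snd : FinDist β where
  p y := ∑ x, W.p (x, y)
  nonneg _ := sum_nonneg fun _ _ => W.nonneg _
  sum_one := by rw [sum_comm, ← Fintype.sum_prod_type']; exact W.sum_one

lemma p_le_fst_p (xy : α × β) : W.p xy ≤ W.fst.p xy.1 :=
  single_le_sum (f := fun y => W.p (xy.1, y)) (fun _ _ => W.nonneg _) (mem_univ xy.2)

lemma p_le_snd_p (xy : α × β) : W.p xy ≤ W.snd.p xy.2 :=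
  single_le_sum (f := fun x => W.p (x, xy.2)) (fun _ _ => W.nonneg _) (mem_univ xy.1)

lemma prob_comp_fst (E : α → Prop) : W.prob (fun xy => E xy.1) = W.fst.prob E := by
  rw [prob, prob, Fintype.sum_prod_type]
  exact sum_congr rfl fun x _ => by by_cases h : E x <;> simp [h, fst]

end FinDist

section plimsup

variable {Ω : ℕ → Type} [∀ n, Fintype (Ω n)] {μ : ∀ n, FinDist (Ω n)} {Z : ∀ n, Ω n → ℝ}

lemma tendsto_prob_of_forall_not {E : ∀ n, Ω n → Prop} (h : ∀ n ω, ¬ E n ω) :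
    Tendsto (fun n => (μ n).prob (E n)) atTop (𝓝 0) := by
  simp [FinDist.prob_eq_zero _ (h _)]

lemma le_of_tendsto_prob_lt {a b : ℝ}
    (ha : Tendsto (fun n => (μ n).prob fun ω => a < Z n ω) atTop (𝓝 0))
    (hb : ∀ c < b, Tendsto (fun n => (μ n).prob fun ω => Z n ω ≤ c) atTop (𝓝 0)) :
    b ≤ a := by
  by_contra! hab
  have hsum := ha.add (hb a hab)
  simp_rw [← not_lt, FinDist.prob_add_prob_not, zero_add] at hsum
  exact one_ne_zero (tendsto_nhds_unique tendsto_const_nhds hsum)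

lemma plimsup_le {a b : ℝ}
    (hb : ∀ c < b, Tendsto (fun n => (μ n).prob fun ω => Z n ω ≤ c) atTop (𝓝 0))
    (h : ∀ ε > 0, Tendsto (fun n => (μ n).prob fun ω => a + ε < Z n ω) atTop (𝓝 0)) :
    plimsup μ Z ≤ a :=
  le_of_forall_pos_le_add fun ε hε =>
    csInf_le ⟨b, fun _ hc => le_of_tendsto_prob_lt hc hb⟩ (h ε hε)

lemma le_plimsup {a c : ℝ}
    (hc : Tendsto (fun n => (μ n).prob fun ω => c < Z n ω) atTop (𝓝 0))
    (h : ∀ α, Tendsto (fun n => (μ n).prob fun ω => α < Z n ω) atTop (𝓝 0) → a ≤ α) :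
    a ≤ plimsup μ Z :=
  le_csInf ⟨c, hc⟩ h

lemma tendsto_prob_lt_of_plimsup_lt {a c : ℝ}
    (hc : Tendsto (fun n => (μ n).prob fun ω => c < Z n ω) atTop (𝓝 0))
    (h : plimsup μ Z < a) :
    Tendsto (fun n => (μ n).prob fun ω => a < Z n ω) atTop (𝓝 0) := by
  obtain ⟨b, hb, hba⟩ := exists_lt_of_csInf_lt ⟨c, hc⟩ h
  exact squeeze_zero (fun n => (μ n).prob_nonneg _)
    (fun n => (μ n).prob_mono fun ω h => hba.trans h) hb

end plimsup

section infoDensity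

variable {α β : Type} [Fintype α] [Fintype β]

noncomputable def infoDensity (W : FinDist (α × β)) (xy : α × β) : ℝ :=
  Real.logb 2 (W.p xy / (W.fst.p xy.1 * W.snd.p xy.2))

lemma Ibar_two_eq {𝒳 : Type} [Fintype 𝒳] (W : ∀ n, FinDist (Word 𝒳 n × Word 𝒳 n)) :
    Ibar 2 W = plimsup W fun n xy => infoDensity (W n) xy / n :=
  rfl

variable (W : FinDist (α × β))

lemma p_le_of_infoDensity_le {xy : α × β} {t : ℝ} (h : infoDensity W xy ≤ t) :
    W.p xy ≤ 2 ^ t * (W.fst.p xy.1 * W.snd.p xy.2) := by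
  rcases (W.nonneg xy).eq_or_lt with h0 | hpos
  · rw [← h0]; exact mul_nonneg (by positivity) (mul_nonneg (W.fst.nonneg _) (W.snd.nonneg _))
  have hm : 0 < W.fst.p xy.1 * W.snd.p xy.2 :=
    mul_pos (hpos.trans_le (W.p_le_fst_p xy)) (hpos.trans_le (W.p_le_snd_p xy))
  have := (Real.logb_le_iff_le_rpow one_lt_two (div_pos hpos hm)).mp h
  rwa [div_le_iff₀ hm] at this

lemma prob_infoDensity_le_and (t : ℝ) (E : α × β → Prop) [DecidablePred E] :
    W.prob (fun xy => infoDensity W xy ≤ t ∧ E xy)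
      ≤ 2 ^ t * ∑ xy, if E xy then W.fst.p xy.1 * W.snd.p xy.2 else 0 := by
  classical
  calc W.prob (fun xy => infoDensity W xy ≤ t ∧ E xy)
      ≤ ∑ xy, if infoDensity W xy ≤ t ∧ E xy then 2 ^ t * (W.fst.p xy.1 * W.snd.p xy.2) else 0 :=
        W.prob_le_sum_of_p_le fun xy h => p_le_of_infoDensity_le W h.1
    _ ≤ ∑ xy, 2 ^ t * if E xy then W.fst.p xy.1 * W.snd.p xy.2 else 0 :=
        sum_le_sum fun xy _ => by
          have : 0 ≤ (2 : ℝ) ^ t * (W.fst.p xy.1 * W.snd.p xy.2) :=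
            mul_nonneg (by positivity) (mul_nonneg (W.fst.nonneg _) (W.snd.nonneg _))
          split_ifs <;> simp_all
    _ = _ := (mul_sum _ _ _).symm

lemma prob_infoDensity_le (t : ℝ) : W.prob (fun xy => infoDensity W xy ≤ t) ≤ 2 ^ t := by
  have h := prob_infoDensity_le_and W t fun _ => True
  simp only [and_true, if_true] at h
  rwa [Fintype.sum_prod_type, ← sum_mul_sum, W.fst.sum_one, W.snd.sum_one, mul_one,
    mul_one] at h

/-- Since both marginals dominate `W.p`, the density ratio is at most `1 / W.p`. -/
lemma prob_lt_infoDensity (t : ℝ) :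
    W.prob (fun xy => t < infoDensity W xy) ≤ Fintype.card (α × β) * 2 ^ (-t) := by
  refine le_trans (W.prob_mono fun xy h => ?_) (W.prob_p_lt_le (by positivity))
  rcases (W.nonneg xy).eq_or_lt with h0 | hpos
  · rw [← h0]; positivity
  have hf := W.p_le_fst_p xy
  have hs := W.p_le_snd_p xy
  have hm : 0 < W.fst.p xy.1 * W.snd.p xy.2 := mul_pos (hpos.trans_le hf) (hpos.trans_le hs)
  have h2 := (Real.lt_logb_iff_rpow_lt one_lt_two (div_pos hpos hm)).mp h
  rw [lt_div_iff₀ hm] at h2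
  have hsq : 2 ^ t * (W.p xy * W.p xy) < W.p xy :=
    (mul_le_mul_of_nonneg_left (mul_le_mul hf hs hpos.le (hpos.le.trans hf))
      (by positivity)).trans_lt h2
  rw [Real.rpow_neg zero_le_two, ← one_div, lt_div_iff₀ (by positivity)]
  nlinarith

lemma tendsto_prob_infoDensity_div_le {α β : ℕ → Type} [∀ n, Fintype (α n)]
    [∀ n, Fintype (β n)] (W : ∀ n, FinDist (α n × β n)) {c : ℝ} (hc : c < 0) :
    Tendsto (fun n => (W n).prob fun xy => infoDensity (W n) xy / n ≤ c) atTop (𝓝 0) := by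
  have hlt : (2 : ℝ) ^ c < 1 := Real.rpow_lt_one_of_one_lt_of_neg one_lt_two hc
  refine squeeze_zero' (Eventually.of_forall fun n => (W n).prob_nonneg _)
    (eventually_atTop.mpr ⟨1, fun n hn => ?_⟩)
    (tendsto_pow_atTop_nhds_zero_of_lt_one (by positivity) hlt)
  have hn : (0 : ℝ) < n := by exact_mod_cast hn
  calc (W n).prob (fun xy => infoDensity (W n) xy / n ≤ c)
      ≤ (W n).prob (fun xy => infoDensity (W n) xy ≤ c * n) :=
        (W n).prob_mono fun xy h => (div_le_iff₀ hn).mp h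
    _ ≤ 2 ^ (c * n) := prob_infoDensity_le _ _
    _ = (2 ^ c) ^ n := Real.rpow_mul_natCast zero_le_two c n

lemma tendsto_prob_three_lt_infoDensity_div (W : ∀ n, FinDist (Word Bool n × Word Bool n)) :
    Tendsto (fun n => (W n).prob fun xy => 3 < infoDensity (W n) xy / n) atTop (𝓝 0) := by
  refine squeeze_zero' (Eventually.of_forall fun n => (W n).prob_nonneg _)
    (eventually_atTop.mpr ⟨1, fun n hn => ?_⟩)
    (tendsto_pow_atTop_nhds_zero_of_lt_one (by norm_num : (0 : ℝ) ≤ 1 / 2) one_half_lt_one)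
  have hn : (0 : ℝ) < n := by exact_mod_cast hn
  calc (W n).prob (fun xy => 3 < infoDensity (W n) xy / n)
      ≤ (W n).prob (fun xy => 3 * n < infoDensity (W n) xy) :=
        (W n).prob_mono fun xy h => (lt_div_iff₀ hn).mp h
    _ ≤ Fintype.card (Word Bool n × Word Bool n) * 2 ^ (-(3 * n : ℝ)) :=
        prob_lt_infoDensity _ _
    _ = (1 / 2) ^ n := by
        rw [Real.rpow_neg zero_le_two, show (3 * n : ℝ) = (3 * n : ℕ) by push_cast; ring,
          Real.rpow_natCast]
        simp only [Fintype.card_prod, Fintype.card_fun, Fintype.card_bool, Fintype.card_fin]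
        push_cast
        rw [pow_mul, ← mul_pow, ← inv_pow, ← mul_pow]
        norm_num

end infoDensity

section binH

lemma binH_eq_binEntropy (u : ℝ) : binH u = Real.binEntropy u / Real.log 2 := by
  simp only [binH, Real.binEntropy, Real.logb, Real.log_inv]
  ring

lemma binH_half : binH (1 / 2) = 1 := by
  rw [binH_eq_binEntropy, one_div, Real.binEntropy_two_inv,
    div_self (Real.log_pos one_lt_two).ne']

lemma binH_continuous : Continuous binH := by
  rw [show binH = fun u => Real.binEntropy u / Real.log 2 from funext binH_eq_binEntropy]
  fun_prop

lemma binH_two_fifths_lt_one : binH (2 / 5) < 1 := by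
  rw [binH_eq_binEntropy, div_lt_one (Real.log_pos one_lt_two)]
  exact Real.binEntropy_lt_log_two.mpr (by norm_num)

end binH

section hamming

lemma hammingDist_le_length {β : Type*} [DecidableEq β] {n : ℕ} (x y : Fin n → β) :
    hammingDist x y ≤ n :=
  hammingDist_le_card_fintype.trans_eq (Fintype.card_fin n)

lemma prod_ite_eq_pow_hammingDist {M β : Type*} [CommMonoid M] [DecidableEq β] {n : ℕ}
    (x y : Fin n → β) (a b : M) :
    ∏ i, (if x i = y i then a else b) = a ^ (n - hammingDist x y) * b ^ hammingDist x y := by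
  rw [prod_ite, prod_const, prod_const]
  have hcard := card_filter_add_card_filter_not (s := univ) (fun i => x i = y i)
  rw [card_univ, Fintype.card_fin] at hcard
  have hd : (univ.filter fun i => ¬ x i = y i).card = hammingDist x y := rfl
  rw [hd] at hcard ⊢
  rw [show (univ.filter fun i => x i = y i).card = n - hammingDist x y by omega]

lemma sum_pow_mul_pow_hammingDist {R : Type*} [CommSemiring R] {n : ℕ} (x : Fin n → Bool)
    (a b : R) : ∑ y, a ^ (n - hammingDist x y) * b ^ hammingDist x y = (a + b) ^ n := by
  simp_rw [← prod_ite_eq_pow_hammingDist]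
  rw [← Fintype.prod_sum (fun i c => if x i = c then a else b)]
  simp_rw [Fintype.sum_bool]
  calc ∏ i, ((if x i = true then a else b) + if x i = false then a else b)
      = ∏ _i : Fin n, (a + b) := prod_congr rfl fun i _ => by cases x i <;> simp [add_comm]
    _ = (a + b) ^ n := by simp

lemma sum_pow_mul_pow_hammingDist' {R : Type*} [CommSemiring R] {n : ℕ} (y : Fin n → Bool)
    (a b : R) : ∑ x, a ^ (n - hammingDist x y) * b ^ hammingDist x y = (a + b) ^ n := by
  simp_rw [hammingDist_comm _ y]
  exact sum_pow_mul_pow_hammingDist y a b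

lemma card_hammingDist_le_le {n : ℕ} (y : Fin n → Bool) {l : ℝ} (hl0 : 0 < l)
    (hl : l ≤ 1 / 2) :
    ((univ.filter fun x : Fin n → Bool => (hammingDist x y : ℝ) ≤ n * l).card : ℝ)
      ≤ 2 ^ (n * binH l) := by
  have hl1 : 0 < 1 - l := by linarith
  set r := l / (1 - l) with hr
  have hr0 : 0 < r := div_pos hl0 hl1
  have hr1 : r ≤ 1 := (div_le_one hl1).mpr (by linarith)
  have hbase : r ^ (-l) * (1 + r) = 2 ^ binH l := by
    have h1r : 1 + r = (1 - l)⁻¹ := by rw [hr]; field_simp; ring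
    refine Real.log_injOn_pos (Set.mem_Ioi.mpr (by positivity)) (Set.mem_Ioi.mpr (by positivity)) ?_
    rw [Real.log_mul (by positivity) (by positivity), Real.log_rpow hr0, Real.log_rpow two_pos, h1r,
      Real.log_inv, hr, Real.log_div hl0.ne' hl1.ne', binH]
    simp only [Real.logb]
    field_simp
    ring
  -- Markov's inequality with the weight `r ^ (d(x, y) - n l)`
  calc ((univ.filter fun x : Fin n → Bool => (hammingDist x y : ℝ) ≤ n * l).card : ℝ)
      ≤ ∑ x : Fin n → Bool, r ^ ((hammingDist x y : ℝ) - n * l) := by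
        rw [natCast_card_filter]
        refine sum_le_sum fun x _ => ?_
        split_ifs with h
        · exact Real.one_le_rpow_of_pos_of_le_one_of_nonpos hr0 hr1 (by linarith)
        · positivity
    _ = r ^ (-l * n) * ∑ x : Fin n → Bool, 1 ^ (n - hammingDist x y) * r ^ hammingDist x y := by
        rw [mul_sum]
        refine sum_congr rfl fun x _ => ?_
        rw [one_pow, one_mul, ← Real.rpow_natCast r, ← Real.rpow_add hr0]
        ring_nf
    _ = 2 ^ (n * binH l) := by
        rw [sum_pow_mul_pow_hammingDist', Real.rpow_mul_natCast hr0.le, ← mul_pow, hbase,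
          ← Real.rpow_natCast, ← Real.rpow_mul zero_le_two, mul_comm]

end hamming

section bsc

variable {n : ℕ} {D : ℝ}

/-- The memoryless binary symmetric channel with crossover probability `D`. -/
noncomputable def bsc (D : ℝ) (x y : Word Bool n) : ℝ :=
  ∏ i, if x i = y i then 1 - D else D

lemma bsc_eq (D : ℝ) (x y : Word Bool n) :
    bsc D x y = (1 - D) ^ (n - hammingDist x y) * D ^ hammingDist x y :=
  prod_ite_eq_pow_hammingDist x y _ _

lemma bsc_nonneg (hD : D ∈ Set.Icc (0 : ℝ) 1) (x y : Word Bool n) : 0 ≤ bsc D x y :=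
  prod_nonneg fun i _ => by split_ifs <;> linarith [hD.1, hD.2]

lemma sum_bsc_mul_pow (D s : ℝ) (x : Word Bool n) :
    ∑ y, bsc D x y * s ^ hammingDist x y = (1 - D + D * s) ^ n := by
  simp_rw [bsc_eq, mul_assoc, ← mul_pow]
  exact sum_pow_mul_pow_hammingDist x _ _

lemma sum_bsc (D : ℝ) (x : Word Bool n) : ∑ y, bsc D x y = 1 := by
  simpa using sum_bsc_mul_pow D 1 x

lemma sum_bsc' (D : ℝ) (y : Word Bool n) : ∑ x, bsc D x y = 1 := by
  simp_rw [bsc_eq, hammingDist_comm _ y, ← bsc_eq]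
  exact sum_bsc D y

lemma logb_bsc (hD0 : 0 < D) (hD1 : D < 1) (x y : Word Bool n) :
    Real.logb 2 (bsc D x y) = -(n * binH D)
      + (n * D - hammingDist x y) * (Real.logb 2 (1 - D) - Real.logb 2 D) := by
  rw [bsc_eq, Real.logb_mul (pow_ne_zero _ (by linarith)) (pow_ne_zero _ hD0.ne'),
    Real.logb_pow, Real.logb_pow,
    Nat.cast_sub (hammingDist_le_length x y), binH]
  ring

noncomputable def bscJoint (μ : FinDist (Word Bool n)) (hD : D ∈ Set.Icc (0 : ℝ) 1) :
    FinDist (Word Bool n × Word Bool n) where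
  p xy := μ.p xy.1 * bsc D xy.1 xy.2
  nonneg xy := mul_nonneg (μ.nonneg _) (bsc_nonneg hD _ _)
  sum_one := by
    simp_rw [Fintype.sum_prod_type, ← mul_sum, sum_bsc, mul_one]
    exact μ.sum_one

variable (μ : FinDist (Word Bool n)) (hD : D ∈ Set.Icc (0 : ℝ) 1)

lemma bscJoint_fst_p (x : Word Bool n) : (bscJoint μ hD).fst.p x = μ.p x := by
  simp [FinDist.fst, bscJoint, ← mul_sum, sum_bsc]

lemma le_bscJoint_snd_p {m : ℝ} (hm : ∀ x, m ≤ μ.p x) (y : Word Bool n) :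
    m ≤ (bscJoint μ hD).snd.p y :=
  calc m = ∑ x, m * bsc D x y := by rw [← mul_sum, sum_bsc', mul_one]
    _ ≤ _ := sum_le_sum fun x _ => mul_le_mul_of_nonneg_right (hm x) (bsc_nonneg hD x y)

lemma infoDensity_bscJoint_le {m : ℝ} (hm0 : 0 < m) (hm : ∀ x, m ≤ μ.p x) (hD0 : 0 < D)
    (hD1 : D < 1) (xy : Word Bool n × Word Bool n) :
    infoDensity (bscJoint μ hD) xy ≤ Real.logb 2 (bsc D xy.1 xy.2) - Real.logb 2 m := by
  have hx : 0 < μ.p xy.1 := hm0.trans_le (hm _)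
  have hy := le_bscJoint_snd_p μ hD hm xy.2
  have hbsc : 0 < bsc D xy.1 xy.2 := prod_pos fun i _ => by split_ifs <;> linarith
  rw [infoDensity, bscJoint_fst_p, show (bscJoint μ hD).p xy = μ.p xy.1 * bsc D xy.1 xy.2 from rfl,
    mul_div_mul_left _ _ hx.ne', Real.logb_div hbsc.ne' (hm0.trans_le hy).ne']
  gcongr
  norm_num

lemma sum_bscJoint_mul_pow (s : ℝ) :
    ∑ xy, (bscJoint μ hD).p xy * s ^ hammingDist xy.1 xy.2 = (1 - D + D * s) ^ n := by
  simp_rw [Fintype.sum_prod_type, show ∀ x y, (bscJoint μ hD).p (x, y) = μ.p x * bsc D x y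
    from fun _ _ => rfl, mul_assoc, ← mul_sum, sum_bsc_mul_pow, ← sum_mul, μ.sum_one, one_mul]

end bsc

section chernoff

lemma one_add_mul_lt_rpow {D t : ℝ} (hD : D < 1) (ht : -D < t) (ht0 : t ≠ 0) :
    1 + D * t < (1 + t) ^ (D + t) := by
  have h1t : 0 < 1 + t := by linarith
  have hlog : t / (1 + t) ≤ Real.log (1 + t) := by
    have := Real.one_sub_inv_le_log_of_pos h1t
    rwa [show 1 - (1 + t)⁻¹ = t / (1 + t) by field_simp; ring] at this
  calc 1 + D * t < 1 + (D + t) * (t / (1 + t)) := by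
        have : D * t * (1 + t) < (D + t) * t := by nlinarith [sq_pos_of_ne_zero ht0]
        rw [add_lt_add_iff_left, mul_div_assoc', lt_div_iff₀ h1t]
        exact this
    _ ≤ 1 + (D + t) * Real.log (1 + t) := by gcongr; linarith
    _ ≤ (1 + t) ^ (D + t) := by
        rw [Real.rpow_def_of_pos h1t]
        linarith [Real.add_one_le_exp (Real.log (1 + t) * (D + t))]

lemma one_le_one_add_rpow {t e : ℝ} (ht : -1 < t) (h : 0 ≤ t * e) : 1 ≤ (1 + t) ^ e := by
  rcases lt_trichotomy t 0 with ht0 | rfl | ht0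
  · exact Real.one_le_rpow_of_pos_of_le_one_of_nonpos (by linarith) (by linarith)
      (nonpos_of_mul_nonneg_right h ht0)
  · simp
  · exact Real.one_le_rpow (by linarith) (nonneg_of_mul_nonneg_right h ht0)

variable {n : ℕ} {D : ℝ} (μ : FinDist (Word Bool n)) (hD : D ∈ Set.Icc (0 : ℝ) 1)

lemma prob_bscJoint_le {t : ℝ} (ht : -1 < t) {E : Word Bool n × Word Bool n → Prop}
    (hE : ∀ xy, E xy → 0 ≤ t * (hammingDist xy.1 xy.2 - n * (D + t))) :
    (bscJoint μ hD).prob E ≤ ((1 + D * t) * (1 + t) ^ (-(D + t))) ^ n := by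
  have h1t : 0 < 1 + t := by linarith
  calc (bscJoint μ hD).prob E
      ≤ ∑ xy, (bscJoint μ hD).p xy * (1 + t) ^ ((hammingDist xy.1 xy.2 : ℝ) - n * (D + t)) :=
        FinDist.prob_le_sum_mul _ (fun _ => by positivity)
          fun xy h => one_le_one_add_rpow ht (hE xy h)
    _ = (1 + t) ^ (-(D + t) * n)
          * ∑ xy, (bscJoint μ hD).p xy * (1 + t) ^ hammingDist xy.1 xy.2 := by
        rw [mul_sum]
        refine sum_congr rfl fun xy _ => ?_
        rw [← Real.rpow_natCast (1 + t), mul_left_comm, ← Real.rpow_add h1t]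
        ring_nf
    _ = _ := by
        rw [sum_bscJoint_mul_pow, Real.rpow_mul_natCast h1t.le, ← mul_pow]
        ring_nf

lemma tendsto_prob_bscJoint (X : ∀ n, FinDist (Word Bool n)) (hD1 : D < 1) {t : ℝ}
    (ht : -D < t) (ht0 : t ≠ 0) {E : ∀ n, Word Bool n × Word Bool n → Prop}
    (hE : ∀ᶠ n in atTop, ∀ xy, E n xy → 0 ≤ t * (hammingDist xy.1 xy.2 - n * (D + t))) :
    Tendsto (fun n => (bscJoint (X n) hD).prob (E n)) atTop (𝓝 0) := by
  have h1t : 0 < 1 + t := by linarith [hD.2]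
  have hθ : (1 + D * t) * (1 + t) ^ (-(D + t)) < 1 := by
    rw [Real.rpow_neg h1t.le, ← div_eq_mul_inv, div_lt_one (by positivity)]
    exact one_add_mul_lt_rpow hD1 ht ht0
  have hθ0 : 0 ≤ (1 + D * t) * (1 + t) ^ (-(D + t)) :=
    mul_nonneg (by nlinarith [hD.1, hD.2]) (by positivity)
  exact squeeze_zero' (Eventually.of_forall fun n => (bscJoint (X n) hD).prob_nonneg _)
    (hE.mono fun n hn => prob_bscJoint_le (X n) hD (by linarith [hD.2]) hn)
    (tendsto_pow_atTop_nhds_zero_of_lt_one hθ0 hθ)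

end chernoff

section achievability

variable {D : ℝ} (X : ∀ n, FinDist (Word Bool n)) (hD : D ∈ Set.Icc (0 : ℝ) 1)

lemma plimsup_hamδ_bscJoint_le (hD1 : D < 1) :
    plimsup (fun n => bscJoint (X n) hD) (fun n xy => hamδ n xy.1 xy.2 / n) ≤ D := by
  refine plimsup_le (b := 0) (fun c hc => tendsto_prob_of_forall_not fun n xy h => ?_)
    fun ε hε => tendsto_prob_bscJoint hD X hD1 (by linarith [hD.1]) hε.ne'
      (Eventually.of_forall fun n xy h => mul_nonneg hε.le ?_)
  · have : 0 ≤ hamδ n xy.1 xy.2 / n := by unfold hamδ; positivity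
    linarith
  · rcases n.eq_zero_or_pos with rfl | hn
    · simp only [CharP.cast_eq_zero, div_zero] at h
      linarith [hD.1]
    · have := (lt_div_iff₀ (by exact_mod_cast hn)).mp h
      simp only [hamδ] at this
      linarith

lemma Ibar_bscJoint_le (hX : ∀ n x, (1 / 2 : ℝ) ^ (n + 1) ≤ (X n).p x) (hD0 : 0 < D)
    (hD2 : D ≤ 1 / 2) : Ibar 2 (fun n => bscJoint (X n) hD) ≤ 1 - binH D := by
  have hD1 : D < 1 := by linarith
  rw [Ibar_two_eq]
  refine plimsup_le (b := 0) (fun c hc => tendsto_prob_infoDensity_div_le _ hc) fun ε hε => ?_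
  set L := Real.logb 2 (1 - D) - Real.logb 2 D
  have hL : 0 ≤ L := sub_nonneg.mpr (Real.logb_le_logb_of_le one_lt_two hD0 (by linarith))
  -- below the typical distortion `n D` by `n c`, the density exceeds `1 - h(D)` by at most `c L`
  set c := min (D / 2) (ε / (2 * (L + 1)))
  have hc0 : 0 < c := lt_min (by linarith) (by positivity)
  have hcD : c < D := (min_le_left _ _).trans_lt (by linarith)
  have hcL : c * L ≤ ε / 2 :=
    calc c * L ≤ ε / (2 * (L + 1)) * L := mul_le_mul_of_nonneg_right (min_le_right _ _) hL
      _ ≤ ε / 2 := by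
        rw [div_mul_eq_mul_div, div_le_div_iff₀ (by positivity) two_pos]
        nlinarith
  refine tendsto_prob_bscJoint hD X hD1 (t := -c) (by linarith) (neg_ne_zero.mpr hc0.ne') ?_
  filter_upwards [eventually_ge_atTop 1, eventually_ge_atTop ⌈2 / ε⌉₊] with n hn1 hnε xy h
  have hn : (0 : ℝ) < n := by exact_mod_cast hn1
  have hnε : 2 ≤ n * ε := (div_le_iff₀ hε).mp ((Nat.ceil_le).mp hnε)
  have hi := infoDensity_bscJoint_le (X n) hD (by positivity) (hX n) hD0 hD1 xy
  have hm : Real.logb 2 ((1 / 2 : ℝ) ^ (n + 1)) = -(n + 1) := by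
    rw [Real.logb_pow, one_div, Real.logb_inv, Real.logb_self_eq_one one_lt_two]
    push_cast
    ring
  rw [logb_bsc hD0 hD1, hm] at hi
  rw [lt_div_iff₀ hn] at h
  by_contra! hd
  have h1 : (n * D - hammingDist xy.1 xy.2) * L ≤ n * c * L :=
    mul_le_mul_of_nonneg_right (by nlinarith) hL
  have h2 : n * (c * L) ≤ n * (ε / 2) := mul_le_mul_of_nonneg_left hcL hn.le
  nlinarith

end achievability

section mixture

lemma pow_three_le_pow_two {w n : ℕ} (h : 5 * w ≤ 3 * n) : 3 ^ w ≤ 2 ^ n := by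
  refine le_of_pow_le_pow_left₀ (n := 5) (by norm_num) (by positivity) ?_
  calc (3 ^ w) ^ 5 = 3 ^ (5 * w) := by ring
    _ ≤ 3 ^ (3 * n) := Nat.pow_le_pow_right (by norm_num) h
    _ = 27 ^ n := by rw [pow_mul]; norm_num
    _ ≤ 32 ^ n := Nat.pow_le_pow_left (by norm_num) n
    _ = (2 ^ n) ^ 5 := by rw [← pow_mul, mul_comm, pow_mul]; norm_num

variable {n : ℕ} (μ : FinDist (Word Bool n))

lemma le_p_of_mixture
    (hμ : ∀ x, μ.p x = (1 / 2) * ∏ i, Pber (x i) + (1 / 2) * ∏ i, Qber (x i))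
    (x : Word Bool n) : (1 / 2 : ℝ) ^ (n + 1) ≤ μ.p x := by
  have hQ : 0 ≤ ∏ i, Qber (x i) := prod_nonneg fun i _ => by unfold Qber; split_ifs <;> norm_num
  rw [hμ, pow_succ]
  simp only [Pber, prod_const, card_univ, Fintype.card_fin]
  linarith

/-- `hammingDist x (fun _ => true)` counts the zeros of `x`; with at least `2n/5` of them,
`Q^n(x) ≤ 3^(3n/5) / 4^n ≤ 2^(-n)`. -/
lemma p_le_of_mixture
    (hμ : ∀ x, μ.p x = (1 / 2) * ∏ i, Pber (x i) + (1 / 2) * ∏ i, Qber (x i))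
    {x : Word Bool n} (hx : 2 * n ≤ 5 * hammingDist x fun _ => true) :
    μ.p x ≤ (1 / 2) ^ n := by
  set k := hammingDist x fun _ => true
  have hkn : k ≤ n := hammingDist_le_length _ _
  have hQ : ∏ i, Qber (x i) = (3 / 4) ^ (n - k) * (1 / 4) ^ k := by
    rw [← prod_ite_eq_pow_hammingDist]
    exact prod_congr rfl fun i _ => by cases x i <;> simp [Qber]
  have h3 : ((3 : ℕ) : ℝ) ^ (n - k) ≤ ((2 : ℕ) : ℝ) ^ n := by
    exact_mod_cast pow_three_le_pow_two (by omega)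
  have hQle : ∏ i, Qber (x i) ≤ (1 / 2) ^ n :=
    calc ∏ i, Qber (x i) = 3 ^ (n - k) * (1 / 4) ^ n := by
          rw [hQ, show (3 / 4 : ℝ) = 3 * (1 / 4) by norm_num, mul_pow, mul_assoc, ← pow_add,
            Nat.sub_add_cancel hkn]
      _ ≤ 2 ^ n * (1 / 4) ^ n := by gcongr; exact_mod_cast h3
      _ = (1 / 2) ^ n := by rw [← mul_pow]; norm_num
  rw [hμ]
  simp only [Pber, prod_const, card_univ, Fintype.card_fin]
  linarith

/-- The uniform half of the mixture puts mass about `1/2` on the words that are rare for `Q^n`. -/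
lemma le_prob_p_le_of_mixture
    (hμ : ∀ x, μ.p x = (1 / 2) * ∏ i, Pber (x i) + (1 / 2) * ∏ i, Qber (x i)) :
    1 / 2 * (1 - ((2 : ℝ) ^ (binH (2 / 5) - 1)) ^ n) ≤ μ.prob fun x => μ.p x ≤ (1 / 2) ^ n := by
  classical
  set B := univ.filter fun x : Word Bool n => (hammingDist x fun _ => true : ℝ) ≤ n * (2 / 5)
  have hB := card_hammingDist_le_le (fun _ => true) (n := n) (by norm_num : (0 : ℝ) < 2 / 5)
    (by norm_num)
  have hBc : ((univ.filter fun x => x ∉ B).card : ℝ) = 2 ^ n - B.card := by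
    have := card_filter_add_card_filter_not (s := univ) (fun x : Word Bool n => x ∈ B)
    rw [filter_mem_eq_inter, univ_inter, card_univ] at this
    simp only [Fintype.card_fun, Fintype.card_bool, Fintype.card_fin] at this
    rw [eq_sub_iff_add_eq, ← Nat.cast_add, add_comm, this]
    push_cast
    ring
  calc 1 / 2 * (1 - ((2 : ℝ) ^ (binH (2 / 5) - 1)) ^ n)
      = (1 / 2) ^ (n + 1) * (2 ^ n - 2 ^ (n * binH (2 / 5))) := by
        rw [Real.rpow_sub_one two_ne_zero, mul_comm (n : ℝ), Real.rpow_mul_natCast zero_le_two,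
          div_pow, one_div, inv_pow]
        field_simp
        ring
    _ ≤ (1 / 2) ^ (n + 1) * (univ.filter fun x => x ∉ B).card := by
        rw [hBc]
        gcongr
    _ = ∑ x, if x ∉ B then (1 / 2 : ℝ) ^ (n + 1) else 0 := by
        rw [natCast_card_filter, mul_sum]
        simp_rw [mul_ite, mul_one, mul_zero]
    _ ≤ μ.prob fun x => μ.p x ≤ (1 / 2) ^ n := sum_le_sum fun x _ => by
        by_cases hxB : x ∈ B
        · simp only [hxB, not_true_eq_false, if_false]
          split_ifs
          exacts [μ.nonneg x, le_rfl]
        have hC : μ.p x ≤ (1 / 2) ^ n := by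
          refine p_le_of_mixture μ hμ ?_
          have : (n : ℝ) * (2 / 5) < hammingDist x fun _ => true := by simpa [B] using hxB
          have : (2 * n : ℝ) < 5 * hammingDist x fun _ => true := by linarith
          exact_mod_cast this.le
        simp only [hxB, not_false_eq_true, if_true, hC]
        exact le_p_of_mixture μ hμ x

end mixture

section converse

lemma prob_infoDensity_le_and_hamming_le_and_fst_le {n : ℕ}
    (W : FinDist (Word Bool n × Word Bool n)) (t : ℝ) {q l : ℝ} (hq : 0 ≤ q) (hl0 : 0 < l)
    (hl : l ≤ 1 / 2) :
    W.prob (fun xy => infoDensity W xy ≤ t ∧ (hammingDist xy.1 xy.2 : ℝ) ≤ n * l ∧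
      W.fst.p xy.1 ≤ q) ≤ 2 ^ t * q * 2 ^ (n * binH l) := by
  classical
  refine (prob_infoDensity_le_and W t _).trans ?_
  rw [mul_assoc]
  gcongr
  calc ∑ xy : Word Bool n × Word Bool n,
        (if (hammingDist xy.1 xy.2 : ℝ) ≤ n * l ∧ W.fst.p xy.1 ≤ q
          then W.fst.p xy.1 * W.snd.p xy.2 else 0)
      ≤ ∑ xy : Word Bool n × Word Bool n,
          W.snd.p xy.2 * if (hammingDist xy.1 xy.2 : ℝ) ≤ n * l then q else 0 :=
        sum_le_sum fun xy _ => by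
          have := W.snd.nonneg xy.2
          split_ifs with h h'
          · nlinarith [h.2, W.fst.nonneg xy.1]
          · exact absurd h.1 h'
          · positivity
          · simp
    _ = ∑ y, W.snd.p y *
          (q * (univ.filter fun x : Word Bool n => (hammingDist x y : ℝ) ≤ n * l).card) := by
        rw [Fintype.sum_prod_type, sum_comm]
        refine sum_congr rfl fun y _ => ?_
        rw [natCast_card_filter, mul_sum, mul_sum]
        simp_rw [mul_ite, mul_one, mul_zero]
    _ ≤ ∑ y, W.snd.p y * (q * 2 ^ (n * binH l)) := by
        gcongr with y
        · exact W.snd.nonneg y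
        · exact card_hammingDist_le_le y hl0 hl
    _ = q * 2 ^ (n * binH l) := by rw [← sum_mul, W.snd.sum_one, one_mul]

/-- A set of mass `≈ 1/2` on which `P_X ≤ 2^(-n)` is nearly covered by `{i > nα} ∪ {d > nl}`. -/
lemma le_pow_add_prob_lt_infoDensity_add_prob_lt_hamδ {n : ℕ} (hn : 0 < n)
    (W : FinDist (Word Bool n × Word Bool n))
    (hW : ∀ x, W.fst.p x = (1 / 2) * ∏ i, Pber (x i) + (1 / 2) * ∏ i, Qber (x i))
    (α : ℝ) {l : ℝ} (hl0 : 0 < l) (hl : l ≤ 1 / 2) :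
    1 / 2 * (1 - ((2 : ℝ) ^ (binH (2 / 5) - 1)) ^ n) ≤ ((2 : ℝ) ^ (α - 1 + binH l)) ^ n
      + W.prob (fun xy => α < infoDensity W xy / n)
      + W.prob (fun xy => l < hamδ n xy.1 xy.2 / n) := by
  have hn : (0 : ℝ) < n := by exact_mod_cast hn
  have hC := le_prob_p_le_of_mixture W.fst hW
  rw [← FinDist.prob_comp_fst] at hC
  calc 1 / 2 * (1 - ((2 : ℝ) ^ (binH (2 / 5) - 1)) ^ n)
      ≤ W.prob fun xy => W.fst.p xy.1 ≤ (1 / 2) ^ n := hC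
    _ ≤ W.prob fun xy => (infoDensity W xy ≤ α * n ∧
          (hammingDist xy.1 xy.2 : ℝ) ≤ n * l ∧ W.fst.p xy.1 ≤ (1 / 2) ^ n) ∨
          α < infoDensity W xy / n ∨ l < hamδ n xy.1 xy.2 / n := by
        refine W.prob_mono fun xy hxy => ?_
        by_cases h1 : α < infoDensity W xy / n
        · exact Or.inr (Or.inl h1)
        by_cases h2 : l < hamδ n xy.1 xy.2 / n
        · exact Or.inr (Or.inr h2)
        refine Or.inl ⟨(div_le_iff₀ hn).mp (not_lt.mp h1), ?_, hxy⟩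
        rw [mul_comm]
        exact (div_le_iff₀ hn).mp (not_lt.mp h2)
    _ ≤ (W.prob fun xy => infoDensity W xy ≤ α * n ∧
          (hammingDist xy.1 xy.2 : ℝ) ≤ n * l ∧ W.fst.p xy.1 ≤ (1 / 2) ^ n)
        + (W.prob (fun xy => α < infoDensity W xy / n)
          + W.prob (fun xy => l < hamδ n xy.1 xy.2 / n)) :=
        (W.prob_or_le _ _).trans (add_le_add_right (W.prob_or_le _ _) _)
    _ ≤ 2 ^ (α * n) * (1 / 2) ^ n * 2 ^ (n * binH l)
        + (W.prob (fun xy => α < infoDensity W xy / n)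
          + W.prob (fun xy => l < hamδ n xy.1 xy.2 / n)) := by
        gcongr
        exact prob_infoDensity_le_and_hamming_le_and_fst_le W _ (by positivity) hl0 hl
    _ = _ := by
        rw [add_assoc, ← Real.rpow_mul_natCast zero_le_two,
          show (α - 1 + binH l) * n = α * n + -n + n * binH l by ring, Real.rpow_add two_pos,
          Real.rpow_add two_pos, Real.rpow_neg zero_le_two, Real.rpow_natCast, one_div, inv_pow]

variable {D : ℝ} {X : ∀ n, FinDist (Word Bool n)}

lemma one_sub_binH_le_of_tendsto
    (hX : ∀ n (x : Word Bool n),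
      (X n).p x = (1 / 2) * ∏ i, Pber (x i) + (1 / 2) * ∏ i, Qber (x i))
    (hD0 : 0 ≤ D) {W : ∀ n, FinDist (Word Bool n × Word Bool n)}
    (hW : W ∈ Admissible X hamδ D) {α : ℝ}
    (hα : Tendsto (fun n => (W n).prob fun xy => α < infoDensity (W n) xy / n) atTop (𝓝 0))
    {l : ℝ} (hDl : D < l) (hl : l ≤ 1 / 2) : 1 - binH l ≤ α := by
  obtain ⟨hfst, hdist⟩ := hW
  by_contra! hlt
  have hρ : (2 : ℝ) ^ (α - 1 + binH l) < 1 :=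
    Real.rpow_lt_one_of_one_lt_of_neg one_lt_two (by linarith)
  have hκ : (2 : ℝ) ^ (binH (2 / 5) - 1) < 1 :=
    Real.rpow_lt_one_of_one_lt_of_neg one_lt_two (by linarith [binH_two_fifths_lt_one])
  have hd : Tendsto (fun n => (W n).prob fun xy => l < hamδ n xy.1 xy.2 / n) atTop (𝓝 0) := by
    refine tendsto_prob_lt_of_plimsup_lt (c := 1) (tendsto_prob_of_forall_not fun n xy => ?_)
      (hdist.trans_lt hDl)
    rw [not_lt, hamδ]
    exact div_le_one_of_le₀ (by exact_mod_cast hammingDist_le_length _ _) n.cast_nonneg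
  have hlim := le_of_tendsto_of_tendsto
    ((tendsto_pow_atTop_nhds_zero_of_lt_one (by positivity) hκ).const_sub 1 |>.const_mul (1 / 2))
    (((tendsto_pow_atTop_nhds_zero_of_lt_one (by positivity) hρ).add hα).add hd)
    (eventually_atTop.mpr ⟨1, fun n hn => le_pow_add_prob_lt_infoDensity_add_prob_lt_hamδ hn
      (W n) (fun x => (hfst n x).trans (hX n x)) α (hD0.trans_lt hDl) hl⟩)
  norm_num at hlim

lemma one_sub_binH_le_Ibar
    (hX : ∀ n (x : Word Bool n),
      (X n).p x = (1 / 2) * ∏ i, Pber (x i) + (1 / 2) * ∏ i, Qber (x i))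
    (hD0 : 0 < D) (hD : D ≤ 1 / 2) {W : ∀ n, FinDist (Word Bool n × Word Bool n)}
    (hW : W ∈ Admissible X hamδ D) : 1 - binH D ≤ Ibar 2 W := by
  rw [Ibar_two_eq]
  refine le_plimsup (tendsto_prob_three_lt_infoDensity_div W) fun α hα => ?_
  rcases hD.eq_or_lt with rfl | hD2
  · rw [binH_half, sub_self]
    exact le_of_tendsto_prob_lt hα fun c hc => tendsto_prob_infoDensity_div_le W hc
  · refine le_of_tendsto (((continuous_const.sub binH_continuous).tendsto D).mono_left
      (nhdsWithin_le_nhds (s := Set.Ioi D))) ?_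
    filter_upwards [Ioo_mem_nhdsGT hD2] with l hl
    exact one_sub_binH_le_of_tendsto hX hD0.le hW hα hl.1 hl.2.le

end converse

/-- For the mixed source `P_{X^n} = (1/2) P^n + (1/2) Q^n` with Hamming distortion and
base-2 logarithms, and `0 < D ≤ 1/2`: `R ≥ inf_Y Ī(X;Y)` over admissible joint sources
if and only if `R ≥ h(1/2) − h(D) = 1 − h(D)`. -/
theorem mixed_source_inf_Ibar_iff
    (X : ∀ n, FinDist (Word Bool n))
    (hX : ∀ n (x : Word Bool n),
      (X n).p x = (1 / 2) * ∏ i, Pber (x i) + (1 / 2) * ∏ i, Qber (x i))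
    (D : ℝ) (hD0 : 0 < D) (hD : D ≤ 1 / 2) (R : ℝ) :
    sInf (Ibar 2 '' Admissible X hamδ D) ≤ R ↔ binH (1 / 2) - binH D ≤ R := by
  have hDI : D ∈ Set.Icc (0 : ℝ) 1 := ⟨hD0.le, by linarith⟩
  have hbsc : (fun n => bscJoint (X n) hDI) ∈ Admissible X hamδ D :=
    ⟨fun n => bscJoint_fst_p (X n) hDI, plimsup_hamδ_bscJoint_le X hDI (by linarith)⟩
  have hlow : ∀ v ∈ Ibar 2 '' Admissible X hamδ D, 1 - binH D ≤ v := by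
    rintro _ ⟨W, hW, rfl⟩
    exact one_sub_binH_le_Ibar hX hD0 hD hW
  have hinf : sInf (Ibar 2 '' Admissible X hamδ D) = 1 - binH D :=
    le_antisymm ((csInf_le ⟨_, hlow⟩ ⟨_, hbsc, rfl⟩).trans
        (Ibar_bscJoint_le X hDI (fun n => le_p_of_mixture (X n) (hX n)) hD0 hD))
      (le_csInf ⟨_, _, hbsc, rfl⟩ hlow)
  rw [hinf, binH_half]
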